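/- Let m ≥ 2 and n ≥ 1. Consider the random restriction ρ on the variables of IND_m(F) defined as follows: independently for each i ∈ [n], pick j_i ∈ [m] uniformly, set x_{i,j_i} = 1 and x_{i,j'} = 0 for j' ≠ j_i, set extension variables so all clauses encoding x_{i,1} ∨ ⋯ ∨ x_{i,m} are satisfied, set y_{i,j} uniformly in {0,1} for j ≠ j_i, and leave y_{i,j_i} unassigned. Then for every clause C over the variables of IND_m(F) and every integer W ≥ 0, the probability that the restricted clause C|_ρ has width at least W is at most (2/(m+1))^W. -/

import Mathlib

/-- Variables of the indexed formula `IND_m(F)`: selector variables `x i j`,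
target variables `y i j`, and extension variables `e i j`. -/
inductive IndVar (n : ℕ) where
  | x (i : Fin n) (j : ℕ)
  | y (i : Fin n) (j : ℕ)
  | e (i : Fin n) (j : ℕ)
deriving DecidableEq

/-- The column index of a variable. -/
def IndVar.jdx {n : ℕ} : IndVar n → ℕ
  | .x _ j => j
  | .y _ j => j
  | .e _ j => j

/-- The value assigned to each variable of `IND_m(F)` by the random restriction
determined by the pointers `J` and the `y`-values `g`: each `x i j` is set to `1` iff
`j = J i`; the extension variable `e i j` (meaning "some `x i j'` with `j' ≥ j` is
true") is set so that all big-OR encoding clauses are satisfied; `y i (J i)` is left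
unassigned and every other `y i j` gets the value `g (i,j)`. -/
def restrVal (n m : ℕ) (J : Fin n → Fin m) (g : Fin n × Fin m → Bool) :
    IndVar n → Option Bool
  | IndVar.x i j => some (decide (j = (J i : ℕ)))
  | IndVar.y i j =>
      if j = (J i : ℕ) then none
      else if h : j < m then some (g (i, ⟨j, h⟩)) else some false
  | IndVar.e i j => some (decide (j ≤ (J i : ℕ)))

/-- Width of the restricted clause `C|_ρ`: `0` if some literal is satisfied (the clause
becomes true), and otherwise the number of literals left unassigned. -/
def restrWidth (n m : ℕ) (J : Fin n → Fin m) (g : Fin n × Fin m → Bool)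
    (C : Finset (IndVar n × Bool)) : ℕ :=
  if ∃ l ∈ C, restrVal n m J g l.1 = some l.2 then 0
  else (C.filter fun l => restrVal n m J g l.1 = none).card

/-!
Give block `i` the weight `0` if `ρ` satisfies a literal of `C` in that block, `(m+1)/2` if the
pointer `j_i` hits a `y`-variable of the block mentioned in `C`, and `1` otherwise. A literal left
unassigned by `ρ` is `y_{i,j_i}`, and as `C` is not tautological there is at most one per block; so
if `C|_ρ` has width `W ≥ 1`, the product of the weights is at least `((m+1)/2)^W`. The blocks are
independent and each weight has expectation at most `1` (for a block mentioned in `C` it is at most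
`(m+1)/2 · 1/m + (1 - 1/m)/2`), so Markov's inequality gives the bound `(2/(m+1))^W`.
-/

open Finset

theorem Fintype.sum_prod_curry_eq_prod_sum {ι α β γ R : Type*} [Fintype ι] [DecidableEq ι]
    [Fintype α] [Fintype β] [DecidableEq β] [Fintype γ] [CommSemiring R]
    (f : ι → α × (β → γ) → R) :
    ∑ ω : (ι → α) × (ι × β → γ), ∏ i, f i (ω.1 i, fun j => ω.2 (i, j))
      = ∏ i, ∑ p, f i p := by
  rw [Fintype.prod_sum]
  exact (Fintype.sum_equiv ((Equiv.arrowProdEquivProdArrow _ _ _).trans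
    (Equiv.prodCongr (Equiv.refl _) (Equiv.curry _ _ _).symm)).symm _ _ fun _ => rfl)

theorem Fintype.card_piFinset_le_pow {β γ : Type*} [Fintype β] [DecidableEq β] [Fintype γ]
    (E : Finset β) (t : β → Finset γ) (ht : ∀ j ∈ E, #(t j) ≤ 1) :
    #(Fintype.piFinset t) ≤ Fintype.card γ ^ (Fintype.card β - #E) := by
  calc #(Fintype.piFinset t) = ∏ j, #(t j) := Fintype.card_piFinset t
    _ ≤ ∏ j, if j ∈ Eᶜ then Fintype.card γ else 1 := by
        gcongr with j
        split_ifs with hj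
        · exact card_le_univ _
        · exact ht j (by simpa using hj)
    _ = Fintype.card γ ^ (Fintype.card β - #E) := by
        rw [prod_ite_mem, prod_const, card_compl]

def IndVar.block {n : ℕ} : IndVar n → Fin n
  | .x i _ => i
  | .y i _ => i
  | .e i _ => i

section Restriction

variable {n m : ℕ}

theorem restrVal_eq_none_iff {J : Fin n → Fin m} {g : Fin n × Fin m → Bool} {v : IndVar n} :
    restrVal n m J g v = none ↔ v = .y v.block (J v.block) := by
  cases v with
  | x i j => simp [restrVal]
  | e i j => simp [restrVal]
  | y i j =>
    simp only [restrVal, IndVar.block, IndVar.y.injEq, true_and]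
    split_ifs <;> simp_all

theorem restrVal_eq_block (J : Fin n → Fin m) (g : Fin n × Fin m → Bool) (v : IndVar n) :
    restrVal n m J g v = restrVal n m (fun _ => J v.block) (fun x => g (v.block, x.2)) v := by
  cases v <;> rfl

/-- The pointer and the `y`-values of a single block. -/
abbrev BlockData (m : ℕ) := Fin m × (Fin m → Bool)

def BlockSat (C : Finset (IndVar n × Bool)) (i : Fin n) (p : BlockData m) : Prop :=
  ∃ l ∈ C, l.1.block = i ∧ restrVal n m (fun _ => p.1) (fun x => p.2 x.2) l.1 = some l.2

instance (C : Finset (IndVar n × Bool)) (i : Fin n) : DecidablePred (BlockSat (m := m) C i) :=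
  fun _ => by unfold BlockSat; infer_instance

def mentionedY (C : Finset (IndVar n × Bool)) (i : Fin n) : Finset (Fin m) :=
  {j | ∃ b, (IndVar.y i j, b) ∈ C}

noncomputable def blockWeight (C : Finset (IndVar n × Bool)) (i : Fin n) (p : BlockData m) : ℝ :=
  if BlockSat C i p then 0 else if p.1 ∈ mentionedY C i then ((m : ℝ) + 1) / 2 else 1

theorem blockWeight_nonneg (C : Finset (IndVar n × Bool)) (i : Fin n) (p : BlockData m) :
    0 ≤ blockWeight C i p := by
  unfold blockWeight
  split_ifs <;> positivity

theorem card_not_blockSat_le (C : Finset (IndVar n × Bool)) (i : Fin n) (j : Fin m) :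
    #{g : Fin m → Bool | ¬ BlockSat C i (j, g)} ≤ 2 ^ (m - #((mentionedY C i).erase j)) := by
  let t : Fin m → Finset Bool := fun j' =>
    if j' = j then univ else ({b | (.y i j', b) ∉ C} : Finset Bool)
  have hsub : ({g | ¬ BlockSat C i (j, g)} : Finset (Fin m → Bool)) ⊆ Fintype.piFinset t := by
    intro g hg
    rw [mem_filter] at hg
    refine Fintype.mem_piFinset.2 fun j' => ?_
    by_cases hj' : j' = j
    · simp [t, hj']
    · have hval : restrVal n m (fun _ => j) (fun x => g x.2) (.y i j') = some (g j') := by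
        simp [restrVal, Fin.val_ne_of_ne hj']
      simpa [t, hj'] using fun hmem => hg.2 ⟨(.y i j', g j'), hmem, rfl, hval⟩
  have ht : ∀ j' ∈ (mentionedY C i).erase j, #(t j') ≤ 1 := by
    intro j' hj'
    obtain ⟨hne, hmen⟩ := mem_erase.1 hj'
    obtain ⟨b₀, hb₀⟩ := (mem_filter.1 hmen).2
    simp only [t, if_neg hne]
    refine card_le_one.2 fun a ha b hb => ?_
    simp only [mem_filter] at ha hb
    have : a ≠ b₀ := fun h => ha.2 (h ▸ hb₀)
    have : b ≠ b₀ := fun h => hb.2 (h ▸ hb₀)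
    cases a <;> cases b <;> cases b₀ <;> simp_all
  simpa using (card_le_card hsub).trans (Fintype.card_piFinset_le_pow _ t ht)

theorem sum_ite_mul_two_pow_le (Y : Finset (Fin m)) :
    ∑ j, (if j ∈ Y then ((m : ℝ) + 1) / 2 else 1) * 2 ^ (m - #(Y.erase j))
      ≤ m * 2 ^ m := by
  have hY : #Y ≤ m := by simpa using card_le_univ Y
  have hterm : ∀ j, (if j ∈ Y then ((m : ℝ) + 1) / 2 else 1) * 2 ^ (m - #(Y.erase j))
      = 2 ^ (m - #Y) * (1 + if j ∈ Y then (m : ℝ) else 0) := by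
    intro j
    split_ifs with hj
    · have : m - #(Y.erase j) = m - #Y + 1 := by
        have := card_pos.2 ⟨j, hj⟩
        rw [card_erase_of_mem hj]; omega
      rw [this, pow_succ]; ring
    · rw [erase_eq_of_notMem hj]; ring
  have hpow : ((#Y : ℝ) + 1) ≤ 2 ^ #Y := by exact_mod_cast Nat.lt_two_pow_self
  calc ∑ j, (if j ∈ Y then ((m : ℝ) + 1) / 2 else 1) * 2 ^ (m - #(Y.erase j))
      = 2 ^ (m - #Y) * (m * (#Y + 1)) := by
        simp only [hterm, ← mul_sum, sum_add_distrib, sum_ite_mem, univ_inter, sum_const,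
          card_univ, Fintype.card_fin, nsmul_eq_mul]
        ring
    _ ≤ 2 ^ (m - #Y) * (m * 2 ^ #Y) := by gcongr
    _ = m * 2 ^ m := by rw [mul_left_comm, ← pow_add, Nat.sub_add_cancel hY]

theorem sum_blockWeight_le (C : Finset (IndVar n × Bool)) (i : Fin n) :
    ∑ p : BlockData m, blockWeight C i p ≤ m * 2 ^ m := by
  refine le_trans ?_ (sum_ite_mul_two_pow_le (mentionedY C i))
  rw [Fintype.sum_prod_type]
  gcongr with j
  calc ∑ g, blockWeight C i (j, g)
      = #{g : Fin m → Bool | ¬ BlockSat C i (j, g)}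
          * (if j ∈ mentionedY C i then ((m : ℝ) + 1) / 2 else 1) := by
        rw [← nsmul_eq_mul, ← sum_const, sum_filter]
        simp only [blockWeight, ite_not]
    _ ≤ _ := by
        rw [mul_comm]
        gcongr
        exact_mod_cast card_not_blockSat_le C i j

theorem restrWidth_le_card_mentioned_pointer (J : Fin n → Fin m) (g : Fin n × Fin m → Bool)
    {C : Finset (IndVar n × Bool)} (htaut : ∀ v : IndVar n, ¬ ((v, true) ∈ C ∧ (v, false) ∈ C)) :
    restrWidth n m J g C ≤ #{i | J i ∈ mentionedY C i} := by
  unfold restrWidth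
  split_ifs
  · exact Nat.zero_le _
  refine card_le_card_of_injOn (fun l => l.1.block) (fun l hl => ?_) fun l₁ hl₁ l₂ hl₂ hblock => ?_
  · obtain ⟨hlC, hnone⟩ := mem_filter.1 hl
    rw [restrVal_eq_none_iff] at hnone
    rw [mem_coe, mem_filter]
    exact ⟨mem_univ _, mem_filter.2 ⟨mem_univ _, l.2, hnone ▸ hlC⟩⟩
  · obtain ⟨hC₁, hnone₁⟩ := mem_filter.1 hl₁
    obtain ⟨hC₂, hnone₂⟩ := mem_filter.1 hl₂
    rw [restrVal_eq_none_iff] at hnone₁ hnone₂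
    have hv : l₁.1 = l₂.1 := by
      rw [hnone₁, hnone₂, show l₁.1.block = l₂.1.block from hblock]
    obtain ⟨v, b₁⟩ := l₁
    obtain ⟨v', b₂⟩ := l₂
    obtain rfl : v = v' := hv
    cases b₁ <;> cases b₂
    exacts [rfl, (htaut v ⟨hC₂, hC₁⟩).elim, (htaut v ⟨hC₁, hC₂⟩).elim, rfl]

theorem prod_blockWeight_of_not_sat {J : Fin n → Fin m} {g : Fin n × Fin m → Bool}
    {C : Finset (IndVar n × Bool)} (hsat : ¬ ∃ l ∈ C, restrVal n m J g l.1 = some l.2) :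
    ∏ i, blockWeight C i (J i, fun j => g (i, j))
      = (((m : ℝ) + 1) / 2) ^ #{i | J i ∈ mentionedY C i} := by
  have hblock : ∀ i, ¬ BlockSat C i (J i, fun j => g (i, j)) := by
    rintro i ⟨l, hl, rfl, hval⟩
    exact hsat ⟨l, hl, (restrVal_eq_block J g l.1).trans hval⟩
  simp only [blockWeight, hblock, if_false]
  rw [prod_ite, prod_const, prod_const, one_pow, mul_one]

theorem one_le_mul_prod_blockWeight (hm : 2 ≤ m) {C : Finset (IndVar n × Bool)}
    (htaut : ∀ v : IndVar n, ¬ ((v, true) ∈ C ∧ (v, false) ∈ C))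
    {J : Fin n → Fin m} {g : Fin n × Fin m → Bool} {W : ℕ} (hW : 0 < W)
    (hwidth : W ≤ restrWidth n m J g C) :
    1 ≤ (2 / ((m : ℝ) + 1)) ^ W * ∏ i, blockWeight C i (J i, fun j => g (i, j)) := by
  have hsat : ¬ ∃ l ∈ C, restrVal n m J g l.1 = some l.2 := fun h => by
    rw [restrWidth, if_pos h] at hwidth
    omega
  have : 1 ≤ ((m : ℝ) + 1) / 2 := by
    rw [one_le_div₀ two_pos]
    exact_mod_cast Nat.succ_le_succ (Nat.one_le_of_lt hm)
  calc (1 : ℝ) = (2 / ((m : ℝ) + 1)) ^ W * (((m : ℝ) + 1) / 2) ^ W := by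
        rw [← mul_pow, div_mul_div_cancel₀ (by positivity), div_self two_ne_zero, one_pow]
    _ ≤ _ := by
        rw [prod_blockWeight_of_not_sat hsat]
        gcongr
        exact hwidth.trans (restrWidth_le_card_mentioned_pointer J g htaut)

end Restriction

theorem stmt_14_general (n m : ℕ) (hm : 2 ≤ m)
    (C : Finset (IndVar n × Bool))
    (htaut : ∀ v : IndVar n, ¬ ((v, true) ∈ C ∧ (v, false) ∈ C))
    (W : ℕ) :
    ((Finset.univ.filter fun Jg : (Fin n → Fin m) × (Fin n × Fin m → Bool) =>
        W ≤ restrWidth n m Jg.1 Jg.2 C).card : ℝ)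
        / (Fintype.card ((Fin n → Fin m) × (Fin n × Fin m → Bool)) : ℝ)
      ≤ (2 / ((m : ℝ) + 1)) ^ W := by
  obtain rfl | hW := W.eq_zero_or_pos
  · rw [pow_zero]
    exact div_le_one_of_le₀ (mod_cast card_le_univ _) (Nat.cast_nonneg _)
  have hcard : (Fintype.card ((Fin n → Fin m) × (Fin n × Fin m → Bool)) : ℝ)
      = ∏ _i : Fin n, (m : ℝ) * 2 ^ m := by
    simp [Fintype.card_prod, mul_pow, ← pow_mul, mul_comm]
  refine div_le_of_le_mul₀ (Nat.cast_nonneg _) (by positivity) ?_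
  let weight (ω : (Fin n → Fin m) × (Fin n × Fin m → Bool)) : ℝ :=
    (2 / ((m : ℝ) + 1)) ^ W * ∏ i, blockWeight C i (ω.1 i, fun j => ω.2 (i, j))
  calc _ ≤ ∑ ω ∈ {ω | W ≤ restrWidth n m ω.1 ω.2 C}, weight ω := by
        simpa using card_nsmul_le_sum _ weight 1 fun ω hω =>
          one_le_mul_prod_blockWeight hm htaut hW (mem_filter.1 hω).2
    _ ≤ ∑ ω, weight ω := sum_le_univ_sum_of_nonneg fun ω =>
          mul_nonneg (by positivity) (prod_nonneg fun i _ => blockWeight_nonneg C i _)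
    _ = (2 / ((m : ℝ) + 1)) ^ W * ∏ i, ∑ p, blockWeight C i p := by
        rw [← mul_sum, Fintype.sum_prod_curry_eq_prod_sum]
    _ ≤ _ := by
        rw [hcard]
        gcongr with i
        · exact fun i _ => sum_nonneg fun p _ => blockWeight_nonneg C i p
        · exact sum_blockWeight_le C i

/-- for the uniform random restriction `ρ = (J, g)` on the variables of
`IND_m(F)` and any (non-tautological) clause `C` over those variables, the probability
that `C|_ρ` has width at least `W` is at most `(2/(m+1))^W`. -/
theorem stmt_14 (n m : ℕ) (hm : 2 ≤ m)
    (C : Finset (IndVar n × Bool))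
    (hC : ∀ l ∈ C, l.1.jdx < m)
    (htaut : ∀ v : IndVar n, ¬ ((v, true) ∈ C ∧ (v, false) ∈ C))
    (W : ℕ) :
    ((Finset.univ.filter fun Jg : (Fin n → Fin m) × (Fin n × Fin m → Bool) =>
        W ≤ restrWidth n m Jg.1 Jg.2 C).card : ℝ)
        / (Fintype.card ((Fin n → Fin m) × (Fin n × Fin m → Bool)) : ℝ)
      ≤ (2 / ((m : ℝ) + 1)) ^ W :=
  stmt_14_general n m hm C htaut W
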